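/- Let q ≥ 2 be a prime power, t ≥ 2, e = ⌊log_q(t−1)⌋, f = (e+1)t − (q^{e+1}−1)/(q−1), and let K be any field. In the polynomial ring K[X^{(u)}_a : 0 ≤ u ≤ e, 0 ≤ a ≤ t−1], for each 0 ≤ u ≤ e let B_u^{(e−u)} denote the 2×(t−q^u) matrix whose first row is (X^{(e−u)}_0, X^{(e−u)}_1, …, X^{(e−u)}_{t−1−q^u}) and whose second row is (X^{(e−u)}_{q^u}, X^{(e−u)}_{q^u+1}, …, X^{(e−u)}_{t−1}), and let Φ = (B_0^{(e)} | B_1^{(e−1)} | ⋯ | B_e^{(0)}) be the resulting 2×f block matrix. Then for every nonzero row vector a ∈ K² and every nonzero row vector b ∈ K^f, the polynomial a·Φ·bᵀ is nonzero; that is, Φ is 1-generic. -/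

import Mathlib

/-!
Send `X^{(e-u)}_c ↦ Y^c` and every other variable to `0`. This algebra map takes `a·Φ·bᵀ` to
`(a₀ + a₁ Y^{q^u}) · ∑_c b_{(u,c)} Y^c` in the domain `K[Y]`, and the first factor is nonzero
because `q^u ≥ 1`; so `a·Φ·bᵀ = 0` forces the `u`-th block of `b` to vanish, for every `u`.
The number of columns is `∑_{u ≤ e} (t - q^u)`, a geometric sum in disguise since
`q^u ≤ q^e ≤ t - 1`.
-/

noncomputable section

namespace Stmt3

open MvPolynomial

/-- The variable `X^{(u)}_a`, in the polynomial ring with variables indexed by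
pairs `(u, a)`. -/
def Xv (K : Type) [Field K] (u a : ℕ) : MvPolynomial (ℕ × ℕ) K :=
  MvPolynomial.X (u, a)

/-- The block matrix `Φ = (B_0^{(e)} | B_1^{(e-1)} | ⋯ | B_e^{(0)})`: the column
indexed by `(u, a)` (with `0 ≤ u ≤ e`, `0 ≤ a < t - q^u`) is the `a`-th column of
`B_u^{(e-u)}`, namely `(X^{(e-u)}_a, X^{(e-u)}_{q^u + a})ᵀ`. -/
def Phi (K : Type) [Field K] (q t e : ℕ) :
    Fin 2 → (Σ u : Fin (e + 1), Fin (t - q ^ (u : ℕ))) → MvPolynomial (ℕ × ℕ) K :=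
  fun i j => if i = 0 then Xv K (e - (j.1 : ℕ)) (j.2 : ℕ)
    else Xv K (e - (j.1 : ℕ)) (q ^ (j.1 : ℕ) + (j.2 : ℕ))

theorem sum_range_tsub_pow {q t n : ℕ} (hq : 2 ≤ q) (h : ∀ u < n, q ^ u ≤ t) :
    ∑ u ∈ Finset.range n, (t - q ^ u) = n * t - (q ^ n - 1) / (q - 1) := by
  rw [Finset.sum_tsub_distrib _ fun u hu ↦ h u (Finset.mem_range.mp hu), Finset.sum_const,
    Finset.card_range, smul_eq_mul, Nat.geomSum_eq hq]

theorem card_sigma_fin_tsub_pow {q t e : ℕ} (hq : 2 ≤ q) (ht : 2 ≤ t)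
    (he : e = Nat.log q (t - 1)) :
    Fintype.card (Σ u : Fin (e + 1), Fin (t - q ^ (u : ℕ))) =
      (e + 1) * t - (q ^ (e + 1) - 1) / (q - 1) := by
  simp only [Fintype.card_sigma, Fintype.card_fin]
  rw [Fin.sum_univ_eq_sum_range (fun u ↦ t - q ^ u), sum_range_tsub_pow hq]
  intro u hu
  have := Nat.pow_le_of_le_log (b := q) (show t - 1 ≠ 0 by omega)
    (show u ≤ Nat.log q (t - 1) by omega)
  omega

theorem C_add_C_mul_X_pow_ne_zero {R : Type*} [Semiring R] {a₀ a₁ : R} {s : ℕ} (hs : s ≠ 0)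
    (ha : a₀ ≠ 0 ∨ a₁ ≠ 0) :
    Polynomial.C a₀ + Polynomial.C a₁ * Polynomial.X ^ s ≠ 0 := by
  intro h
  rcases ha with h₀ | h₁
  · exact h₀ (by simpa [hs.symm] using congrArg (Polynomial.coeff · 0) h)
  · exact h₁ (by simpa [Polynomial.coeff_C, hs] using congrArg (Polynomial.coeff · s) h)

def specializeBlock (R : Type*) [Semiring R] (w : ℕ) : ℕ × ℕ → Polynomial R :=
  fun v ↦ if v.1 = w then Polynomial.X ^ v.2 else 0

theorem aeval_specializeBlock_Phi {K : Type} [Field K] [DecidableEq K] {q t e : ℕ}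
    (u : Fin (e + 1)) (a : Fin 2 → K) (b : (Σ u : Fin (e + 1), Fin (t - q ^ (u : ℕ))) → K) :
    aeval (specializeBlock K (e - u)) (∑ i, ∑ j, C (a i * b j) * Phi K q t e i j) =
      (Polynomial.C (a 0) + Polynomial.C (a 1) * Polynomial.X ^ q ^ (u : ℕ)) *
        Polynomial.ofFn _ (fun c ↦ b ⟨u, c⟩) := by
  rw [Finset.sum_comm, map_sum, Fintype.sum_sigma, Finset.sum_eq_single u]
  · rw [Polynomial.ofFn_eq_sum_monomial, Finset.mul_sum]
    refine Finset.sum_congr rfl fun c _ ↦ ?_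
    simp only [Fin.sum_univ_two, Phi, Xv, Fin.isValue, ↓reduceIte, one_ne_zero, map_add, map_mul,
      algHom_C, Polynomial.algebraMap_eq, aeval_X, specializeBlock,
      ← Polynomial.C_mul_X_pow_eq_monomial]
    ring
  · intro u' _ hu'
    have : e - (u' : ℕ) ≠ e - u := by omega
    simp [Fin.sum_univ_two, Phi, Xv, specializeBlock, this]
  · simp

theorem syzygy_distinguisher_stmt3
    (q t e f : ℕ) (hq2 : 2 ≤ q) (ht : 2 ≤ t)
    (he : e = Nat.log q (t - 1))
    (hf : f = (e + 1) * t - (q ^ (e + 1) - 1) / (q - 1))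
    (K : Type) [Field K] :
    Fintype.card (Σ u : Fin (e + 1), Fin (t - q ^ (u : ℕ))) = f
    ∧ ∀ (a : Fin 2 → K) (b : (Σ u : Fin (e + 1), Fin (t - q ^ (u : ℕ))) → K),
        a ≠ 0 → b ≠ 0 →
        (∑ i, ∑ j, MvPolynomial.C (a i * b j) * Phi K q t e i j) ≠ 0 := by
  classical
  refine ⟨hf ▸ card_sigma_fin_tsub_pow hq2 ht he, fun a b ha hb hS ↦ hb ?_⟩
  have ha' : a 0 ≠ 0 ∨ a 1 ≠ 0 := Fin.exists_fin_two.mp (Function.ne_iff.mp ha)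
  ext ⟨u, c⟩
  have hblock := congrArg (aeval (specializeBlock K (e - u))) hS
  rw [aeval_specializeBlock_Phi, map_zero, mul_eq_zero,
    or_iff_right (C_add_C_mul_X_pow_ne_zero (pow_ne_zero _ (by omega)) ha'),
    map_eq_zero_iff _ (Polynomial.injective_ofFn _)] at hblock
  exact congrFun hblock c

end Stmt3
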